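/- Suppose W_d takes exactly three values A, B, C on GF(2^m)^*. Then 2^{2m} |V| = 2^{2m}(A + B + C) - 2^m(AB + BC + CA) + (2^m - 1)ABC, where V is the set of roots of 1 + x^d + (1 + x)^d in GF(2^m). -/

import Mathlib

open Finset

/-- `(-1)^{Tr(y)}` as an integer, where `Tr` is the absolute trace to `GF(2)`. -/
noncomputable def sgn (F : Type*) [Field F] [Fintype F] [Algebra (ZMod 2) F] (y : F) : ℤ :=
  if Algebra.trace (ZMod 2) F y = 0 then 1 else -1

/-- The Walsh transform `W_d(a) = Σ_{x ∈ GF(2^m)} (-1)^{Tr(x^d + a x)}`. -/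
noncomputable def Wd (F : Type*) [Field F] [Fintype F] [Algebra (ZMod 2) F]
    (d : ℕ) (a : F) : ℤ :=
  ∑ x : F, sgn F (x ^ d + a * x)

/-!
On `F^*` every value of `W_d` is a root of `(X - A)(X - B)(X - C)`, so summing over `F^*`
gives `P₃ - (A + B + C) P₂ + (AB + BC + CA) P₁ - ABC P₀ = 0` for the moments
`P_k = Σ_{a ≠ 0} W_d(a)^k`. With `q = 2^m`, orthogonality of the additive character `(-1)^Tr`
evaluates the moments over all of `F` for the Walsh transform of any map `f : F → F`.
Since `x ↦ x^d` permutes `F`, `W_d(0) = 0`, and the substitution `x = y t` turns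
`P₃ = q Σ_{x,y} (-1)^{Tr(x^d + y^d + (x+y)^d)}` into `q² |V|`.
-/

section
variable {F : Type*} [Field F] [Fintype F] [Algebra (ZMod 2) F]

theorem charP_two_of_algebra_zmod : CharP F 2 :=
  charP_of_injective_algebraMap' (ZMod 2) 2

attribute [local instance] charP_two_of_algebra_zmod

variable (F) in
noncomputable def traceChar : AddChar F ℤ where
  toFun := sgn F
  map_zero_eq_one' := by simp [sgn]
  map_add_eq_mul' x y := by
    unfold sgn
    rw [map_add]
    generalize Algebra.trace (ZMod 2) F x = s
    generalize Algebra.trace (ZMod 2) F y = t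
    revert s t
    decide

@[simp]
theorem traceChar_apply (y : F) : traceChar F y = sgn F y := rfl

theorem sgn_zero : sgn F 0 = 1 := (traceChar F).map_zero_eq_one

theorem sgn_add (x y : F) : sgn F (x + y) = sgn F x * sgn F y := (traceChar F).map_add_eq_mul x y

theorem traceChar_isPrimitive : (traceChar F).IsPrimitive := by
  intro a ha h
  obtain ⟨z, hz⟩ := Algebra.trace_surjective (ZMod 2) F 1
  have := DFunLike.congr_fun h (a⁻¹ * z)
  simp [sgn, ha, hz] at this

variable (F) in
noncomputable def walsh (f : F → F) (a : F) : ℤ := ∑ x, sgn F (f x + a * x)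

theorem Wd_eq_walsh (d : ℕ) : Wd F d = walsh F (· ^ d) := rfl

theorem walsh_sq (f : F → F) (a : F) :
    walsh F f a ^ 2 = ∑ x, ∑ y, sgn F (f x + f y + a * (x + y)) := by
  rw [sq, walsh, sum_mul_sum]
  refine sum_congr rfl fun x _ => sum_congr rfl fun y _ => ?_
  rw [← sgn_add]
  ring_nf

theorem walsh_cube (f : F → F) (a : F) :
    walsh F f a ^ 3 = ∑ x, ∑ y, ∑ z, sgn F (f x + f y + f z + a * (x + y + z)) := by
  rw [pow_succ, walsh_sq, walsh]
  simp_rw [sum_mul, mul_sum, ← sgn_add]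
  refine sum_congr rfl fun x _ => sum_congr rfl fun y _ => sum_congr rfl fun z _ => ?_
  ring_nf

theorem sum_sgn_pow_add_pow_add_add_pow {d : ℕ} (hd : d ≠ 0) (y : F) :
    ∑ x, sgn F (x ^ d + y ^ d + (x + y) ^ d) =
      ∑ t, sgn F (y ^ d * (1 + t ^ d + (1 + t) ^ d)) := by
  rcases eq_or_ne y 0 with rfl | hy
  · -- both sides are `q`: in characteristic 2, `x^d + x^d = 0`
    simp [zero_pow hd, CharTwo.add_self_eq_zero, sgn_zero]
  refine (Fintype.sum_bijective (y * ·) (mulLeft_bijective₀ y hy) _ _ fun t => ?_).symm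
  rw [show y * t + y = y * (1 + t) by ring, mul_pow, mul_pow]
  congr 1
  ring

variable [DecidableEq F]

theorem sum_sgn_mul (s : F) :
    ∑ a, sgn F (a * s) = if s = 0 then (Fintype.card F : ℤ) else 0 := by
  simpa [apply_ite] using AddChar.sum_mulShift s traceChar_isPrimitive

theorem sum_sgn_add_mul (y s : F) :
    ∑ a, sgn F (y + a * s) = if s = 0 then Fintype.card F * sgn F y else 0 := by
  simp_rw [sgn_add, ← mul_sum, sum_sgn_mul]
  split_ifs <;> ring

theorem sum_walsh (f : F → F) : ∑ a, walsh F f a = Fintype.card F * sgn F (f 0) := by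
  simp only [walsh]
  rw [sum_comm]
  simp_rw [sum_sgn_add_mul]
  simp

theorem sum_walsh_sq (f : F → F) : ∑ a, walsh F f a ^ 2 = (Fintype.card F : ℤ) ^ 2 := by
  simp_rw [walsh_sq]
  rw [sum_comm]
  refine (sum_congr rfl fun x _ => sum_comm).trans ?_
  simp_rw [sum_sgn_add_mul, CharTwo.add_eq_zero]
  simp [CharTwo.add_self_eq_zero, sgn_zero, sq]

theorem sum_walsh_cube (f : F → F) : ∑ a, walsh F f a ^ 3 =
    Fintype.card F * ∑ x, ∑ y, sgn F (f x + f y + f (x + y)) := by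
  simp_rw [walsh_cube]
  rw [sum_comm]
  refine (sum_congr rfl fun x _ => sum_comm.trans
    (sum_congr rfl fun y _ => sum_comm)).trans ?_
  simp_rw [sum_sgn_add_mul, CharTwo.add_eq_zero]
  simp [mul_sum]

theorem walsh_zero_of_bijective {f : F → F} (hf : Function.Bijective f) : walsh F f 0 = 0 := by
  simp only [walsh, zero_mul, add_zero]
  rw [Fintype.sum_bijective f hf (fun x => sgn F (f x)) (sgn F) fun x => rfl]
  simpa using sum_sgn_mul (1 : F)

theorem sum_sum_sgn_pow_add_pow_add_add_pow {d : ℕ} (hd : d ≠ 0)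
    (hbij : Function.Bijective fun x : F => x ^ d) :
    ∑ x, ∑ y, sgn F (x ^ d + y ^ d + (x + y) ^ d) =
      Fintype.card F * (#{t : F | 1 + t ^ d + (1 + t) ^ d = 0} : ℤ) := by
  have hpow (c : F) : ∑ y, sgn F (y ^ d * c) = if c = 0 then (Fintype.card F : ℤ) else 0 := by
    rw [← sum_sgn_mul]
    exact Fintype.sum_bijective _ hbij _ _ fun y => rfl
  rw [sum_comm]
  simp_rw [sum_sgn_pow_add_pow_add_add_pow hd]
  rw [sum_comm]
  simp_rw [hpow]
  rw [← sum_filter, sum_const, nsmul_eq_mul, mul_comm]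

end

theorem pow_bijective_of_coprime {F : Type*} [Field F] [Fintype F] {d : ℕ} (hd : d ≠ 0)
    (hcop : d.Coprime (Fintype.card F - 1)) : Function.Bijective fun x : F => x ^ d := by
  refine Finite.injective_iff_bijective.mp fun x y hxy => ?_
  rcases eq_or_ne y 0 with rfl | hy
  · rwa [zero_pow hd, pow_eq_zero_iff hd] at hxy
  have hx : x ≠ 0 := by
    rintro rfl
    rw [zero_pow hd, eq_comm, pow_eq_zero_iff hd] at hxy
    exact hy hxy
  have h1 : (x / y) ^ d = 1 := by rw [div_pow, hxy, div_self (pow_ne_zero _ hy)]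
  have h2 : (x / y) ^ (Fintype.card F - 1) = 1 :=
    FiniteField.pow_card_sub_one_eq_one _ (div_ne_zero hx hy)
  have h3 : (x / y) ^ 1 = 1 := by rw [← hcop.gcd_eq_one]; exact pow_gcd_eq_one.mpr ⟨h1, h2⟩
  rwa [pow_one, div_eq_one_iff_eq hy] at h3

theorem sum_pow_three_of_image_subset {ι R : Type*} [DecidableEq ι] [CommRing R] [DecidableEq R]
    {s : Finset ι} {g : ι → R} {A B C : R} (hg : s.image g ⊆ {A, B, C}) :
    ∑ i ∈ s, g i ^ 3 = (A + B + C) * ∑ i ∈ s, g i ^ 2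
      - (A * B + B * C + C * A) * ∑ i ∈ s, g i + A * B * C * #s := by
  calc ∑ i ∈ s, g i ^ 3
      = ∑ i ∈ s, ((A + B + C) * g i ^ 2 - (A * B + B * C + C * A) * g i + A * B * C) := by
        refine sum_congr rfl fun i hi => ?_
        have := hg (mem_image_of_mem g hi)
        simp only [mem_insert, mem_singleton] at this
        rcases this with h | h | h <;> rw [h] <;> ring
    _ = _ := by
        rw [sum_add_distrib, sum_sub_distrib, ← mul_sum, ← mul_sum, sum_const, nsmul_eq_mul]
        ring

theorem stmt_8_general {m : ℕ} (F : Type*) [Field F] [Fintype F] [DecidableEq F]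
    [Algebra (ZMod 2) F] (hF : Fintype.card F = 2 ^ m)
    (d : ℕ) (hd : Nat.Coprime d (2 ^ m - 1))
    (A B C : ℤ) (hAB : A ≠ B) (hAC : A ≠ C) (hBC : B ≠ C)
    (himg : (Finset.univ \ {(0 : F)}).image (Wd F d) = {A, B, C}) :
    2 ^ (2 * m) *
        ((Finset.univ.filter fun x : F => 1 + x ^ d + (1 + x) ^ d = 0).card : ℤ) =
      2 ^ (2 * m) * (A + B + C) - 2 ^ m * (A * B + B * C + C * A) +
        (2 ^ m - 1) * (A * B * C) := by
  set T : Finset F := univ \ {0}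
  have hcardT : #T = Fintype.card F - 1 := by simp [T, card_sdiff]
  have hd0 : d ≠ 0 := by
    -- for `d = 0` coprimality forces `q = 2`, leaving room for only one value on `F^*`
    rintro rfl
    have h3 : #({A, B, C} : Finset ℤ) = 3 := by simp [card_insert_of_notMem, *]
    have h1 : #T = 1 := by
      rw [hcardT, hF]
      simpa using hd
    have := card_image_le (s := T) (f := Wd F 0)
    rw [himg, h3, h1] at this
    omega
  have hbij := pow_bijective_of_coprime hd0 (hF ▸ hd)
  have hW0 : Wd F d 0 = 0 := walsh_zero_of_bijective hbij
  have sum_T {g : F → ℤ} (hg : g 0 = 0) : ∑ a ∈ T, g a = ∑ a, g a :=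
    sum_subset (subset_univ T) fun a _ ha => by simp_all [T]
  have key := sum_pow_three_of_image_subset himg.le
  rw [sum_T (g := (Wd F d · ^ 3)) (by simp [hW0]), sum_T (g := (Wd F d · ^ 2)) (by simp [hW0]),
    sum_T hW0, hcardT, Wd_eq_walsh, sum_walsh_cube, sum_walsh_sq, sum_walsh] at key
  rw [sum_sum_sgn_pow_add_pow_add_add_pow hd0 hbij] at key
  have hq : (Fintype.card F : ℤ) = 2 ^ m := by exact_mod_cast hF
  rw [zero_pow hd0, sgn_zero, Nat.cast_sub Fintype.card_pos, hq] at key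
  rw [pow_mul']
  linear_combination key

/-- the identity 2^(2m)|V| = 2^(2m)(A+B+C) - 2^m(AB+BC+CA) + (2^m-1)ABC
when W_d takes exactly the three distinct values A, B, C on GF(2^m)^*. -/
theorem stmt_8 {m : ℕ} (hm : 1 ≤ m) (F : Type*) [Field F] [Fintype F] [DecidableEq F]
    [Algebra (ZMod 2) F] (hF : Fintype.card F = 2 ^ m)
    (d : ℕ) (hd : Nat.Coprime d (2 ^ m - 1))
    (A B C : ℤ) (hAB : A ≠ B) (hAC : A ≠ C) (hBC : B ≠ C)
    (himg : (Finset.univ \ {(0 : F)}).image (Wd F d) = {A, B, C}) :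
    2 ^ (2 * m) *
        ((Finset.univ.filter fun x : F => 1 + x ^ d + (1 + x) ^ d = 0).card : ℤ) =
      2 ^ (2 * m) * (A + B + C) - 2 ^ m * (A * B + B * C + C * A) +
        (2 ^ m - 1) * (A * B * C) :=
  stmt_8_general F hF d hd A B C hAB hAC hBC himg
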